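/- arXiv:2503.17433 — 15 statements merged into one kernel-verified Lean document; each statement's English description precedes it below -/
import Mathlib

section
/- Let (P,≤) be a poset, Θ a congruence on (P,≤), and a ∈ P. Then the congruence class [a]Θ is a convex subset of P, i.e. if x,z ∈ [a]Θ, y ∈ P and x ≤ y ≤ z, then y ∈ [a]Θ. -/
/- Common definitions for congruences on posets. -/

variable {P : Type*}

/-- The set of maximal elements of `A`. -/
def MaxEl [PartialOrder P] (A : Set P) : Set P := {x ∈ A | ∀ y ∈ A, x ≤ y → x = y}

/-- The set of minimal elements of `A`. -/
def MinEl [PartialOrder P] (A : Set P) : Set P := {x ∈ A | ∀ y ∈ A, y ≤ x → x = y}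

/-- `Max L(a,b)`: the maximal elements of the set of lower bounds of `{a, b}`. -/
def MaxL [PartialOrder P] (a b : P) : Set P := MaxEl (lowerBounds {a, b})

/-- `Min U(a,b)`: the minimal elements of the set of upper bounds of `{a, b}`. -/
def MinU [PartialOrder P] (a b : P) : Set P := MinEl (upperBounds {a, b})

/-- Compatibility of a binary relation `R` with a binary operator `Q : P × P → 2^P`. -/
def Compat (R : P → P → Prop) (Q : P → P → Set P) : Prop :=
  ∀ a₁ b₁ a₂ b₂ : P, R a₁ b₁ → R a₂ b₂ → ∃ a ∈ Q a₁ a₂, ∃ b ∈ Q b₁ b₂, R a b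

/-- A congruence on a poset: an equivalence relation compatible with `Max L` and `Min U`. -/
def IsCong [PartialOrder P] (R : P → P → Prop) : Prop :=
  Equivalence R ∧ Compat R MaxL ∧ Compat R MinU

/-- The class `[a]Θ` of the relation `Θ`. -/
def cls (R : P → P → Prop) (a : P) : Set P := {x | R a x}

theorem stmt1 [PartialOrder P] (Θ : P → P → Prop) (hΘ : IsCong Θ)
    (a x y z : P) (hx : x ∈ cls Θ a) (hz : z ∈ cls Θ a) (hxy : x ≤ y) (hyz : y ≤ z) :
    y ∈ cls Θ a := by
  obtain ⟨heq, _, hU⟩ := hΘ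
  have hxz : Θ x z := heq.trans (heq.symm hx) hz
  obtain ⟨u, hu, v, hv, huv⟩ := hU x z y y hxz (heq.refl y)
  have hyU : y ∈ upperBounds ({x, y} : Set P) := by
    intro w hw; rcases hw with rfl | rfl; exacts [hxy, le_rfl]
  have hzU : z ∈ upperBounds ({z, y} : Set P) := by
    intro w hw; rcases hw with rfl | rfl; exacts [le_rfl, hyz]
  have hu' : u = y := hu.2 y hyU (hu.1 (by simp))
  have hv' : v = z := hv.2 z hzU (hv.1 (by simp))
  subst hu' hv'
  exact heq.trans hz (heq.symm huv)
end

section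
/- Let (P,≤) be a poset, Θ a congruence on (P,≤), and c,d ∈ P. Then (c,d) ∈ Θ if and only if there exists (e,f) ∈ Θ with e ≤ c ≤ f and e ≤ d ≤ f. -/
/- Common definitions for congruences on posets. -/

variable {P : Type*}

lemma minU_of_le [PartialOrder P] {a b x : P} (h : x ∈ MinU a b) (hab : a ≤ b) : x = b := by
  obtain ⟨hx, hmin⟩ := h
  have hb : b ∈ upperBounds {a, b} := by
    intro z hz
    rcases hz with rfl | hz
    · exact hab
    · simp_all
  exact hmin b hb (hx (by simp))

lemma maxL_of_le [PartialOrder P] {a b x : P} (h : x ∈ MaxL a b) (hab : a ≤ b) : x = a := by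
  obtain ⟨hx, hmax⟩ := h
  have ha : a ∈ lowerBounds {a, b} := by
    intro z hz
    rcases hz with rfl | hz
    · exact le_refl _
    · simp_all
  exact hmax a ha (hx (by simp))

lemma minU_upper [PartialOrder P] {a b x : P} (h : x ∈ MinU a b) : a ≤ x ∧ b ≤ x :=
  ⟨h.1 (by simp), h.1 (by simp)⟩

lemma maxL_lower [PartialOrder P] {a b x : P} (h : x ∈ MaxL a b) : x ≤ a ∧ x ≤ b :=
  ⟨h.1 (by simp), h.1 (by simp)⟩

lemma minU_of_ge [PartialOrder P] {a b x : P} (h : x ∈ MinU a b) (hba : b ≤ a) : x = a := by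
  have : x ∈ MinU b a := by
    have : ({a, b} : Set P) = {b, a} := by ext z; simp [or_comm]
    simpa [MinU, this] using h
  exact minU_of_le this hba

theorem stmt2 [PartialOrder P] (Θ : P → P → Prop) (hΘ : IsCong Θ)
    (c d : P) :
    Θ c d ↔ ∃ e f : P, Θ e f ∧ e ≤ c ∧ c ≤ f ∧ e ≤ d ∧ d ≤ f := by
  obtain ⟨heq, hmaxl, hminu⟩ := hΘ
  constructor
  · intro hcd
    -- lower: apply Compat MaxL to (c,c) and (c,d)
    obtain ⟨a, ha, b, hb, hab⟩ := hmaxl c c c d (heq.refl c) hcd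
    have hac : a = c := maxL_of_le ha le_rfl
    rw [hac] at hab
    -- hab : Θ a b with b ∈ MaxL c d
    obtain ⟨hbc, hbd⟩ := maxL_lower hb
    -- upper: apply Compat MinU to (d,d) and (c,d)
    obtain ⟨u, hu, v, hv, huv⟩ := hminu d d c d (heq.refl d) hcd
    have hvd : v = d := minU_of_le hv le_rfl
    rw [hvd] at huv
    obtain ⟨hdu, hcu⟩ := minU_upper hu
    -- e := b, f := u; Θ b u via b ~ c ~ d ~ u
    exact ⟨b, u, heq.trans (heq.trans (heq.symm hab) hcd) (heq.symm huv), hbc, hcu, hbd, hdu⟩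
  · rintro ⟨e, f, hef, hec, hcf, hed, hdf⟩
    -- Θ c f : Compat MinU on (e,f) and (c,c)
    obtain ⟨p, hp, q, hq, hpq⟩ := hminu e f c c hef (heq.refl c)
    have hpc : p = c := minU_of_le hp hec
    have hqf : q = f := minU_of_ge hq hcf
    rw [hpc, hqf] at hpq
    -- Θ d f : Compat MinU on (e,f) and (d,d)
    obtain ⟨r, hr, s, hs, hrs⟩ := hminu e f d d hef (heq.refl d)
    have hrd : r = d := minU_of_le hr hed
    have hsf : s = f := minU_of_ge hs hdf
    rw [hrd, hsf] at hrs
    exact heq.trans hpq (heq.symm hrs)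
end

section
/- Let (P,≤) be a poset and Θ, Φ congruences on (P,≤). Then Θ = Φ if and only if Θ and Φ contain exactly the same pairs of comparable elements, i.e. Θ ∩ {(x,y) ∈ P² : x ≤ y} = Φ ∩ {(x,y) ∈ P² : x ≤ y}. -/
/- Common definitions for congruences on posets. -/

variable {P : Type*}

theorem stmt3 [PartialOrder P] (Θ Φ : P → P → Prop) (hΘ : IsCong Θ) (hΦ : IsCong Φ) :
    Θ = Φ ↔ ∀ x y : P, x ≤ y → (Θ x y ↔ Φ x y) := by
  constructor
  · rintro rfl x y _; rfl
  · intro h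
    have key : ∀ (A B : P → P → Prop), IsCong A → (∀ x y : P, x ≤ y → A x y → B x y) →
        Equivalence B → ∀ x y, A x y → B x y := by
      intro A B hA hAB hBeq x y hxy
      obtain ⟨a, ha, b, hb, hab⟩ := hA.2.1 x y y y hxy (hA.1.refl y)
      -- b ∈ MaxL y y, so b = y
      have hby : b = y := by
        have hyl : y ∈ lowerBounds ({y, y} : Set P) := by
          intro z hz; rcases hz with rfl | rfl <;> rfl
        exact hb.2 y hyl (hb.1 (Set.mem_insert y _))
      rw [hby] at hab
      have hax : a ≤ x := ha.1 (Set.mem_insert x _)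
      have hay : a ≤ y := ha.1 (by simp)
      have hAax : A a x := hA.1.trans hab (hA.1.symm hxy)
      have hBax : B a x := hAB a x hax hAax
      have hBay : B a y := hAB a y hay hab
      exact hBeq.trans (hBeq.symm hBax) hBay
    funext x y
    ext
    constructor
    · exact key Θ Φ hΘ (fun x y hle ht => (h x y hle).1 ht) hΦ.1 x y
    · exact key Φ Θ hΦ (fun x y hle ht => (h x y hle).2 ht) hΘ.1 x y
end

section
/- Let (P,≤) be a poset satisfying both the Ascending Chain Condition and the Descending Chain Condition, Θ a congruence on (P,≤), and a ∈ P. Then the congruence class [a]Θ is a closed interval, i.e. there exist b,c ∈ P with [a]Θ = [b,c] := {x ∈ P : b ≤ x ≤ c}. -/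
/- Common definitions for congruences on posets. -/

variable {P : Type*}

section helpers
variable [PartialOrder P]

lemma exists_maximal_of_acc (hACC : ¬ ∃ f : ℕ → P, StrictMono f)
    {A : Set P} (hA : A.Nonempty) : ∃ m ∈ A, ∀ x ∈ A, m ≤ x → m = x := by
  by_contra h
  push_neg at h
  have h' : ∀ m : A, ∃ x : A, (m : P) < x := by
    rintro ⟨m, hm⟩
    obtain ⟨x, hx, hle, hne⟩ := h m hm
    exact ⟨⟨x, hx⟩, lt_of_le_of_ne hle hne⟩
  choose g hg using h'
  obtain ⟨a0, ha0⟩ := hA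
  refine hACC ⟨fun n => (g^[n] ⟨a0, ha0⟩ : A), strictMono_nat_of_lt_succ fun n => ?_⟩
  rw [Function.iterate_succ_apply']
  exact hg _

lemma exists_minimal_of_dcc (hDCC : ¬ ∃ f : ℕ → P, StrictAnti f)
    {A : Set P} (hA : A.Nonempty) : ∃ m ∈ A, ∀ x ∈ A, x ≤ m → m = x := by
  by_contra h
  push_neg at h
  have h' : ∀ m : A, ∃ x : A, (x : P) < m := by
    rintro ⟨m, hm⟩
    obtain ⟨x, hx, hle, hne⟩ := h m hm
    exact ⟨⟨x, hx⟩, lt_of_le_of_ne hle (fun e => hne e.symm)⟩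
  choose g hg using h'
  obtain ⟨a0, ha0⟩ := hA
  refine hDCC ⟨fun n => (g^[n] ⟨a0, ha0⟩ : A), strictAnti_nat_of_succ_lt fun n => ?_⟩
  rw [Function.iterate_succ_apply']
  exact hg _

lemma minU_self_of_le {x y : P} (h : y ≤ x) : MinU x y = {x} := by
  ext z
  simp only [MinU, MinEl, Set.mem_setOf_eq, Set.mem_singleton_iff, upperBounds,
    Set.mem_insert_iff, Set.mem_singleton_iff]
  constructor
  · rintro ⟨hz, hmin⟩
    exact hmin x (by rintro w (rfl | rfl); exacts [le_rfl, h]) (hz (Or.inl rfl))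
  · rintro rfl
    refine ⟨by rintro w (rfl | rfl); exacts [le_rfl, h], fun w hw hwz => le_antisymm ?_ hwz⟩
    exact hw (Or.inl rfl)

lemma maxL_self_of_le {x y : P} (h : x ≤ y) : MaxL x y = {x} := by
  ext z
  simp only [MaxL, MaxEl, Set.mem_setOf_eq, Set.mem_singleton_iff, lowerBounds,
    Set.mem_insert_iff, Set.mem_singleton_iff]
  constructor
  · rintro ⟨hz, hmax⟩
    exact hmax x (by rintro w (rfl | rfl); exacts [le_rfl, h]) (hz (Or.inl rfl))
  · rintro rfl
    refine ⟨by rintro w (rfl | rfl); exacts [le_rfl, h], fun w hw hwz => le_antisymm hwz ?_⟩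
    exact hw (Or.inl rfl)

end helpers

lemma minU_comm [PartialOrder P] (x y : P) : MinU x y = MinU y x := by
  unfold MinU; rw [Set.pair_comm]

lemma maxL_comm [PartialOrder P] (x y : P) : MaxL x y = MaxL y x := by
  unfold MaxL; rw [Set.pair_comm]


theorem stmt4 [PartialOrder P]
    (hACC : ¬ ∃ f : ℕ → P, StrictMono f) (hDCC : ¬ ∃ f : ℕ → P, StrictAnti f)
    (Θ : P → P → Prop) (hΘ : IsCong Θ) (a : P) :
    ∃ b c : P, cls Θ a = Set.Icc b c := by
  obtain ⟨hEq, hL, hU⟩ := hΘ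
  have haA : a ∈ cls Θ a := hEq.refl a
  obtain ⟨c, hcA, hcmax⟩ := exists_maximal_of_acc hACC ⟨a, haA⟩
  obtain ⟨b, hbA, hbmin⟩ := exists_minimal_of_dcc hDCC ⟨a, haA⟩
  refine ⟨b, c, Set.ext fun x => ⟨fun hx => ?_, fun hx => ?_⟩⟩
  · constructor
    · -- b ≤ x using MaxL compatibility on (x,b),(b,b)
      obtain ⟨u, hu, v, hv, huv⟩ := hL x b b b (hEq.trans (hEq.symm hx) hbA) (hEq.refl b)
      rw [maxL_self_of_le (le_refl b), Set.mem_singleton_iff] at hv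
      rw [hv] at huv
      have huA : u ∈ cls Θ a := hEq.trans hbA (hEq.symm huv)
      have hub : u ≤ b := hu.1 (Set.mem_insert_of_mem _ rfl)
      rw [hbmin u huA hub]
      exact hu.1 (Set.mem_insert _ _)
    · -- x ≤ c using MinU compatibility on (x,c),(c,c)
      obtain ⟨u, hu, v, hv, huv⟩ := hU x c c c (hEq.trans (hEq.symm hx) hcA) (hEq.refl c)
      rw [minU_self_of_le (le_refl c), Set.mem_singleton_iff] at hv
      rw [hv] at huv
      have huA : u ∈ cls Θ a := hEq.trans hcA (hEq.symm huv)
      have hcu : c ≤ u := hu.1 (Set.mem_insert_of_mem _ rfl)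
      rw [hcmax u huA hcu]
      exact hu.1 (Set.mem_insert _ _)
  · -- convexity: b ≤ x ≤ c implies x ∈ cls Θ a
    obtain ⟨hbx, hxc⟩ := hx
    obtain ⟨u, hu, v, hv, huv⟩ := hU b c x x (hEq.trans (hEq.symm hbA) hcA) (hEq.refl x)
    rw [minU_comm b x, minU_self_of_le hbx, Set.mem_singleton_iff] at hu
    rw [minU_self_of_le hxc, Set.mem_singleton_iff] at hv
    subst hu; subst hv
    exact hEq.trans hcA (hEq.symm huv)
end

section
/- Let (P,≤) be a poset and Θ a congruence on (P,≤). Assume the closed intervals [a,b] and [c,d] are classes of Θ (where a ≤ b and c ≤ d). Then a ≤ c if and only if b ≤ d. -/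
/- Common definitions for congruences on posets. -/

variable {P : Type*}

theorem stmt5 [PartialOrder P] (Θ : P → P → Prop) (hΘ : IsCong Θ)
    (a b c d : P) (hab : a ≤ b) (hcd : c ≤ d)
    (h₁ : ∃ e : P, cls Θ e = Set.Icc a b) (h₂ : ∃ e : P, cls Θ e = Set.Icc c d) :
    a ≤ c ↔ b ≤ d := by
  obtain ⟨⟨hrefl, hsymm, htrans⟩, hL, hU⟩ := hΘ
  obtain ⟨e₁, he₁⟩ := h₁
  obtain ⟨e₂, he₂⟩ := h₂
  have hea : Θ e₁ a := by have : a ∈ cls Θ e₁ := he₁ ▸ ⟨le_refl a, hab⟩; exact this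
  have heb : Θ e₁ b := by have : b ∈ cls Θ e₁ := he₁ ▸ ⟨hab, le_refl b⟩; exact this
  have hec : Θ e₂ c := by have : c ∈ cls Θ e₂ := he₂ ▸ ⟨le_refl c, hcd⟩; exact this
  have hed : Θ e₂ d := by have : d ∈ cls Θ e₂ := he₂ ▸ ⟨hcd, le_refl d⟩; exact this
  have hΘab : Θ a b := htrans (hsymm hea) heb
  have hΘcd : Θ c d := htrans (hsymm hec) hed
  constructor
  · intro hac
    obtain ⟨x, hx, y, hy, hxy⟩ := hU b a d c (hsymm hΘab) (hsymm hΘcd)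
    -- y ∈ MinU a c ; since a ≤ c, y = c
    have hyc : y = c := by
      have hcub : c ∈ upperBounds ({a, c} : Set P) := by
        intro z hz; rcases hz with rfl | rfl; exact hac; exact le_refl _
      exact hy.2 c hcub (hy.1 (by simp))
    -- Θ x c, so x ∈ [c,d], hence x ≤ d; also b ≤ x
    have hxcd : x ∈ Set.Icc c d := by
      rw [← he₂]
      exact htrans hec (hsymm (hyc ▸ hxy))
    have hbx : b ≤ x := hx.1 (by simp)
    exact hbx.trans hxcd.2
  · intro hbd
    obtain ⟨x, hx, y, hy, hxy⟩ := hL a b c d hΘab hΘcd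
    -- y ∈ MaxL b d ; since b ≤ d, y = b
    have hyb : y = b := by
      have hblb : b ∈ lowerBounds ({b, d} : Set P) := by
        intro z hz; rcases hz with rfl | rfl; exact le_refl _; exact hbd
      exact hy.2 b hblb (hy.1 (by simp))
    have hxab : x ∈ Set.Icc a b := by
      rw [← he₁]
      exact htrans heb (hsymm (hyb ▸ hxy))
    have hxa : x ≤ a := hx.1 (by simp)
    have : x = a := le_antisymm hxa hxab.1
    exact this ▸ hx.1 (by simp)
end

section
/- Let (P,≤) be a poset, b ∈ P, Θ a congruence on (P,≤), and (a,c) ∈ Θ. Then: (i) if [b]Θ ∩ U({c}) ≠ ∅ then Max L(a,b) ∩ [c]Θ ≠ ∅; (ii) if [b]Θ ∩ L({c}) ≠ ∅ then Min U(a,b) ∩ [c]Θ ≠ ∅. -/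
/- Common definitions for congruences on posets. -/

variable {P : Type*}

lemma maxL_of_le_s6 [PartialOrder P] {c b' : P} (h : c ≤ b') {y : P}
    (hy : y ∈ MaxL c b') : y = c := by
  obtain ⟨hy1, hy2⟩ := hy
  have hc : c ∈ lowerBounds ({c, b'} : Set P) := by
    intro z hz
    rcases hz with rfl | hz
    · exact le_refl _
    · simp at hz; subst hz; exact h
  exact hy2 c hc (hy1 (Set.mem_insert _ _))

lemma minU_of_le_s6 [PartialOrder P] {c b' : P} (h : b' ≤ c) {y : P}
    (hy : y ∈ MinU c b') : y = c := by
  obtain ⟨hy1, hy2⟩ := hy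
  have hc : c ∈ upperBounds ({c, b'} : Set P) := by
    intro z hz
    rcases hz with rfl | hz
    · exact le_refl _
    · simp at hz; subst hz; exact h
  exact hy2 c hc (hy1 (Set.mem_insert _ _))

theorem stmt6 [PartialOrder P] (Θ : P → P → Prop) (hΘ : IsCong Θ)
    (a b c : P) (hac : Θ a c) :
    ((cls Θ b ∩ upperBounds {c}).Nonempty → (MaxL a b ∩ cls Θ c).Nonempty) ∧
    ((cls Θ b ∩ lowerBounds {c}).Nonempty → (MinU a b ∩ cls Θ c).Nonempty) := by
  obtain ⟨heq, hmaxl, hminu⟩ := hΘ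
  constructor
  · rintro ⟨b', hbb', hub⟩
    have hcb' : c ≤ b' := hub (Set.mem_singleton c)
    obtain ⟨x, hx, y, hy, hxy⟩ := hmaxl a c b b' hac hbb'
    have : y = c := maxL_of_le_s6 hcb' hy
    subst this
    exact ⟨x, hx, heq.symm hxy⟩
  · rintro ⟨b', hbb', hlb⟩
    have hcb' : b' ≤ c := hlb (Set.mem_singleton c)
    obtain ⟨x, hx, y, hy, hxy⟩ := hminu a c b b' hac hbb'
    have : y = c := minU_of_le_s6 hcb' hy
    subst this
    exact ⟨x, hx, heq.symm hxy⟩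
end

section
/- Let (P,≤,1) be a poset with top element 1 and Θ a congruence on (P,≤). Then the kernel F := [1]Θ is a strong filter of (P,≤): F is nonempty, upward closed (x ∈ F, y ∈ P, x ≤ y imply y ∈ F), and L({x,y}) ∩ F ≠ ∅ for all x,y ∈ F. -/
/- Common definitions for congruences on posets. -/

variable {P : Type*}

theorem stmt7 [PartialOrder P] [OrderTop P] (Θ : P → P → Prop) (hΘ : IsCong Θ) :
    (cls Θ (⊤ : P)).Nonempty ∧
    (∀ x ∈ cls Θ (⊤ : P), ∀ y : P, x ≤ y → y ∈ cls Θ (⊤ : P)) ∧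
    (∀ x ∈ cls Θ (⊤ : P), ∀ y ∈ cls Θ (⊤ : P),
      (lowerBounds {x, y} ∩ cls Θ (⊤ : P)).Nonempty) := by
  obtain ⟨heq, hL, hU⟩ := hΘ
  refine ⟨⟨⊤, heq.refl ⊤⟩, ?_, ?_⟩
  · intro x hx y hxy
    obtain ⟨a, ha, b, hb, hab⟩ := hU ⊤ x y y hx (heq.refl y)
    have ha' : a = ⊤ := le_antisymm le_top (ha.1 (by simp))
    have hyub : y ∈ upperBounds {x, y} := by
      intro z hz; rcases hz with rfl | rfl
      · exact hxy
      · exact le_rfl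
    have hb' : b = y := hb.2 y hyub (hb.1 (by simp))
    have : Θ ⊤ y := by rw [← ha', ← hb']; exact hab
    exact this
  · intro x hx y hy
    obtain ⟨a, ha, b, hb, hab⟩ := hL x ⊤ y ⊤ (heq.symm hx) (heq.symm hy)
    have htlb : (⊤ : P) ∈ lowerBounds ({⊤, ⊤} : Set P) := by
      intro z hz; rcases hz with rfl | rfl <;> exact le_rfl
    have hb' : b = ⊤ := hb.2 ⊤ htlb le_top
    exact ⟨a, ha.1, heq.symm (hb' ▸ hab)⟩
end

section
/- Let (P,≤,1) be a poset with top element 1, Θ a congruence on (P,≤), F := [1]Θ its kernel, and a,b ∈ P. Then: (i) if b ∈ F then Max L(a,b) ∩ [a]Θ ≠ ∅; (ii) if a ∈ F then Min U(a,b) ∩ F ≠ ∅. -/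
/- Common definitions for congruences on posets. -/

variable {P : Type*}

theorem stmt8 [PartialOrder P] [OrderTop P] (Θ : P → P → Prop) (hΘ : IsCong Θ)
    (a b : P) :
    (b ∈ cls Θ (⊤ : P) → (MaxL a b ∩ cls Θ a).Nonempty) ∧
    (a ∈ cls Θ (⊤ : P) → (MinU a b ∩ cls Θ (⊤ : P)).Nonempty) := by
  obtain ⟨heq, hL, hU⟩ := hΘ
  constructor
  · intro hb
    obtain ⟨x, hx, y, hy, hxy⟩ := hL a a ⊤ b (heq.refl a) hb
    have hxa : x = a := by
      obtain ⟨hx1, hx2⟩ := hx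
      exact hx2 a (by intro z hz; rcases hz with rfl | rfl; exact le_rfl; exact le_top)
        (hx1 (by left; rfl))
    exact ⟨y, hy, hxa ▸ hxy⟩
  · intro ha
    obtain ⟨x, hx, y, hy, hxy⟩ := hU ⊤ a b b ha (heq.refl b)
    have hxt : x = ⊤ := le_antisymm le_top (hx.1 (by left; rfl))
    exact ⟨y, hy, hxt ▸ hxy⟩
end

section
/- Let (P,≤,*) be a relatively pseudocomplemented poset satisfying the Ascending Chain Condition, and let Θ be a reflexive binary relation on P that is compatible with the binary operators (x,y) ↦ Max L(x,y) and (x,y) ↦ Min U(x,y) and with the operation * (i.e. (a₁,b₁),(a₂,b₂) ∈ Θ imply (a₁*a₂, b₁*b₂) ∈ Θ). Then Θ is an equivalence relation, hence a congruence on (P,≤,*). -/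
/- Common definitions for congruences on posets. -/

variable {P : Type*}

theorem stmt11 [PartialOrder P] (hACC : ¬ ∃ f : ℕ → P, StrictMono f)
    (s : P → P → P)
    (hs : ∀ x y : P, IsGreatest {z : P | lowerBounds {x, z} ⊆ lowerBounds {y}} (s x y))
    (Θ : P → P → Prop) (hrefl : ∀ x : P, Θ x x)
    (hmax : Compat Θ MaxL) (hmin : Compat Θ MinU)
    (hstar : ∀ a₁ b₁ a₂ b₂ : P, Θ a₁ b₁ → Θ a₂ b₂ → Θ (s a₁ a₂) (s b₁ b₂)) :
    Equivalence Θ ∧ IsCong Θ := by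
  
  classical
  -- well-foundedness of > from ACC
  have wf : WellFounded (fun a b : P => b < a) := by
    by_contra hw
    rw [RelEmbedding.wellFounded_iff_isEmpty, not_isEmpty_iff] at hw
    obtain ⟨f⟩ := hw
    exact hACC ⟨f, fun a b hab => f.map_rel_iff.2 hab⟩
  have lpair : ∀ t x z : P, t ∈ lowerBounds {x, z} ↔ t ≤ x ∧ t ≤ z := by
    intro t x z; simp [lowerBounds]
  have upair : ∀ t x z : P, t ∈ upperBounds {x, z} ↔ x ≤ t ∧ z ≤ t := by
    intro t x z; simp [upperBounds]
  -- basic s facts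
  have down : ∀ x y t : P, t ≤ x → t ≤ s x y → t ≤ y := by
    intro x y t h1 h2
    have := (hs x y).1 ((lpair t x (s x y)).2 ⟨h1, h2⟩)
    exact this rfl
  have s_le_of : ∀ x y z : P, (∀ t, t ≤ x → t ≤ z → t ≤ y) → z ≤ s x y := by
    intro x y z h
    refine (hs x y).2 ?_
    intro t ht
    have := (lpair t x z).1 ht
    intro a ha
    rw [Set.mem_singleton_iff] at ha
    subst ha
    exact h t this.1 this.2
  have le_s : ∀ x y : P, y ≤ s x y := fun x y => s_le_of x y y (fun t _ h2 => h2)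
  have le_ss : ∀ x z : P, z ≤ s (s z x) x :=
    fun x z => s_le_of (s z x) x z (fun t h1 h2 => down z x t h2 h1)
  -- singleton lemmas for MinU / MaxL
  have minU_of_le : ∀ x y : P, x ≤ y → MinU x y = {y} := by
    intro x y h
    ext t
    simp only [MinU, MinEl, Set.mem_setOf_eq, Set.mem_singleton_iff]
    constructor
    · rintro ⟨ht, hminl⟩
      exact hminl y ((upair y x y).2 ⟨h, le_rfl⟩) (((upair t x y).1 ht).2)
    · rintro rfl
      exact ⟨(upair t x t).2 ⟨h, le_rfl⟩, fun w hw hwy =>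
        le_antisymm hwy (((upair w x t).1 hw).2) |>.symm⟩
  have minU_of_ge : ∀ x y : P, y ≤ x → MinU x y = {x} := by
    intro x y h
    ext t
    simp only [MinU, MinEl, Set.mem_setOf_eq, Set.mem_singleton_iff]
    constructor
    · rintro ⟨ht, hminl⟩
      exact hminl x ((upair x x y).2 ⟨le_rfl, h⟩) (((upair t x y).1 ht).1)
    · rintro rfl
      exact ⟨(upair t t y).2 ⟨le_rfl, h⟩, fun w hw hwx =>
        le_antisymm hwx (((upair w t y).1 hw).1) |>.symm⟩
  have maxL_of_le : ∀ x y : P, x ≤ y → MaxL x y = {x} := by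
    intro x y h
    ext t
    simp only [MaxL, MaxEl, Set.mem_setOf_eq, Set.mem_singleton_iff]
    constructor
    · rintro ⟨ht, hmaxl⟩
      exact hmaxl x ((lpair x x y).2 ⟨le_rfl, h⟩) (((lpair t x y).1 ht).1)
    · rintro rfl
      exact ⟨(lpair t t y).2 ⟨le_rfl, h⟩, fun w hw hxw =>
        le_antisymm hxw (((lpair w t y).1 hw).1)⟩
  have maxL_of_ge : ∀ x y : P, y ≤ x → MaxL x y = {y} := by
    intro x y h
    ext t
    simp only [MaxL, MaxEl, Set.mem_setOf_eq, Set.mem_singleton_iff]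
    constructor
    · rintro ⟨ht, hmaxl⟩
      exact hmaxl y ((lpair y x y).2 ⟨h, le_rfl⟩) (((lpair t x y).1 ht).2)
    · rintro rfl
      exact ⟨(lpair t x t).2 ⟨h, le_rfl⟩, fun w hw hyw =>
        le_antisymm hyw (((lpair w x t).1 hw).2)⟩
  -- helpers to apply compatibility when both MinU/MaxL sets are singletons
  have hminU : ∀ {a₁ b₁ a₂ b₂ u v : P}, Θ a₁ b₁ → Θ a₂ b₂ →
      MinU a₁ a₂ = {u} → MinU b₁ b₂ = {v} → Θ u v := by
    intro a₁ b₁ a₂ b₂ u v h1 h2 e1 e2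
    obtain ⟨a, ha, b, hb, hab⟩ := hmin a₁ b₁ a₂ b₂ h1 h2
    rw [e1, Set.mem_singleton_iff] at ha
    rw [e2, Set.mem_singleton_iff] at hb
    subst ha; subst hb; exact hab
  have hmaxL : ∀ {a₁ b₁ a₂ b₂ u v : P}, Θ a₁ b₁ → Θ a₂ b₂ →
      MaxL a₁ a₂ = {u} → MaxL b₁ b₂ = {v} → Θ u v := by
    intro a₁ b₁ a₂ b₂ u v h1 h2 e1 e2
    obtain ⟨a, ha, b, hb, hab⟩ := hmax a₁ b₁ a₂ b₂ h1 h2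
    rw [e1, Set.mem_singleton_iff] at ha
    rw [e2, Set.mem_singleton_iff] at hb
    subst ha; subst hb; exact hab
  -- the core: assuming a top element, Θ is symmetric and transitive
  have core : ∀ one : P, (∀ z : P, z ≤ one) →
      (∀ x y : P, Θ x y → Θ y x) ∧ (∀ x y z : P, Θ x y → Θ y z → Θ x z) := by
    intro one htop
    have sone : ∀ y : P, s one y = y := fun y =>
      le_antisymm (down one y (s one y) (htop _) le_rfl) (le_s one y)
    have sxx : ∀ x : P, s x x = one := fun x =>
      le_antisymm (htop _) (s_le_of x x one (fun t h1 _ => h1))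
    have A : ∀ p : P, Θ p one → Θ one p := by
      intro p h
      have := hstar p one p p h (hrefl p)
      rwa [sxx, sone] at this
    have A' : ∀ p : P, Θ one p → Θ p one := by
      intro p h
      have := hstar one p p p h (hrefl p)
      rwa [sxx, sone] at this
    have T : ∀ p q : P, Θ q one → Θ q p → Θ one p := by
      intro p q h1 h2
      have := hstar q one q p h1 h2
      rwa [sxx, sone] at this
    have T' : ∀ p q : P, Θ one q → Θ p q → Θ p one := by
      intro p q h1 h2
      have := hstar one q p q h1 h2
      rwa [sxx, sone] at this
    -- comparable transitivity lemmas
    have C : ∀ x y z : P, x ≤ y → y ≤ z → Θ y x → Θ y z → Θ z x := by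
      intro x y z hxy hyz h1 h2
      have hqp : Θ (s y x) (s z x) := hstar y z x x h2 (hrefl x)
      have hq1 : Θ (s y x) one := by
        have := hstar y x x x h1 (hrefl x)
        rwa [sxx] at this
      have h1p : Θ one (s z x) := T _ _ hq1 hqp
      have hp1 : Θ (s z x) one := A' _ h1p
      have hz1x : Θ (s (s z x) x) x := by
        have := hstar (s z x) one x x hp1 (hrefl x)
        rwa [sone] at this
      exact hmaxL hz1x (hrefl z) (maxL_of_ge _ _ (le_ss x z)) (maxL_of_le _ _ (le_trans hxy hyz))
    have C' : ∀ x y z : P, x ≤ y → y ≤ z → Θ x y → Θ z y → Θ x z := by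
      intro x y z hxy hyz h1 h2
      have hpq : Θ (s z x) (s y x) := hstar z y x x h2 (hrefl x)
      have h1q : Θ one (s y x) := by
        have := hstar x y x x h1 (hrefl x)
        rwa [sxx] at this
      have hp1 : Θ (s z x) one := T' _ _ h1q hpq
      have h1p : Θ one (s z x) := A _ hp1
      have hxz1 : Θ x (s (s z x) x) := by
        have := hstar one (s z x) x x h1p (hrefl x)
        rwa [sone] at this
      exact hmaxL (hrefl z) hxz1 (maxL_of_ge _ _ (le_trans hxy hyz)) (maxL_of_le _ _ (le_ss x z))
    -- one expansion step
    have K : ∀ x y : P, Θ x y → ∃ x' y' : P, x ≤ x' ∧ y ≤ x' ∧ x ≤ y' ∧ y ≤ y' ∧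
        Θ x' y' ∧ Θ y' x' ∧ Θ x x' ∧ Θ x' x ∧ Θ y y' ∧ Θ y' y := by
      intro x y h
      have h1 : Θ one (s y x) := by
        have := hstar x y x x h (hrefl x)
        rwa [sxx] at this
      have h1' : Θ (s y x) one := A' _ h1
      have hx'x : Θ (s (s y x) x) x := by
        have := hstar (s y x) one x x h1' (hrefl x)
        rwa [sone] at this
      have hxx' : Θ x (s (s y x) x) := by
        have := hstar one (s y x) x x h1 (hrefl x)
        rwa [sone] at this
      have h2 : Θ (s x y) one := by
        have := hstar x y y y h (hrefl y)
        rwa [sxx] at this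
      have h2' : Θ one (s x y) := A _ h2
      have hyy' : Θ y (s (s x y) y) := by
        have := hstar one (s x y) y y h2' (hrefl y)
        rwa [sone] at this
      have hy'y : Θ (s (s x y) y) y := by
        have := hstar (s x y) one y y h2 (hrefl y)
        rwa [sone] at this
      refine ⟨s (s y x) x, s (s x y) y, le_s _ _, le_ss x y, le_ss y x, le_s _ _, ?_, ?_,
        hxx', hx'x, hyy', hy'y⟩
      · exact hminU hyy' hx'x (minU_of_le _ _ (le_ss x y)) (minU_of_ge _ _ (le_ss y x))
      · exact hminU hy'y hxx' (minU_of_ge _ _ (le_ss y x)) (minU_of_le _ _ (le_ss x y))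
    -- merging, by well-founded recursion
    have M : ∀ x y : P, Θ x y → Θ y x →
        ∃ m, x ≤ m ∧ y ≤ m ∧ Θ x m ∧ Θ m x ∧ Θ y m ∧ Θ m y := by
      intro x
      refine wf.induction (C := fun x => ∀ y : P, Θ x y → Θ y x →
        ∃ m, x ≤ m ∧ y ≤ m ∧ Θ x m ∧ Θ m x ∧ Θ y m ∧ Θ m y) x ?_
      intro x ihx y
      refine wf.induction (C := fun y => Θ x y → Θ y x →
        ∃ m, x ≤ m ∧ y ≤ m ∧ Θ x m ∧ Θ m x ∧ Θ y m ∧ Θ m y) y ?_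
      intro y ihy h1 h2
      obtain ⟨x', y', hxx'le, hyx'le, hxy'le, hyy'le, hx'y', hy'x', hxx', hx'x, hyy', hy'y⟩ :=
        K x y h1
      rcases hxx'le.lt_or_eq with hlt | heq
      · obtain ⟨m, hx'm, hy'm, h3, h4, h5, h6⟩ := ihx x' hlt y' hx'y' hy'x'
        exact ⟨m, le_trans hxx'le hx'm, le_trans hyy'le hy'm,
          C' x x' m hxx'le hx'm hxx' h4, C x x' m hxx'le hx'm hx'x h3,
          C' y y' m hyy'le hy'm hyy' h6, C y y' m hyy'le hy'm hy'y h5⟩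
      · rw [← heq] at hx'y' hy'x' hyx'le
        rcases hyy'le.lt_or_eq with hlt2 | heq2
        · obtain ⟨m, hxm, hy'm, h3, h4, h5, h6⟩ := ihy y' hlt2 hx'y' hy'x'
          exact ⟨m, hxm, le_trans hyy'le hy'm, h3, h4,
            C' y y' m hyy'le hy'm hyy' h6, C y y' m hyy'le hy'm hy'y h5⟩
        · rw [← heq2] at hxy'le
          have hxy : x = y := le_antisymm hxy'le hyx'le
          subst hxy
          exact ⟨x, le_rfl, le_rfl, hrefl x, hrefl x, hrefl x, hrefl x⟩
    -- symmetry
    have symm : ∀ x y : P, Θ x y → Θ y x := by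
      intro x y h
      obtain ⟨x', y', hxx'le, hyx'le, hxy'le, hyy'le, hx'y', hy'x', hxx', hx'x, hyy', hy'y⟩ :=
        K x y h
      obtain ⟨m, hx'm, hy'm, h3, h4, h5, h6⟩ := M x' y' hx'y' hy'x'
      have hmx : Θ m x := C x x' m hxx'le hx'm hx'x h3
      have hym : Θ y m := C' y y' m hyy'le hy'm hyy' h6
      exact hmaxL hmx hym (maxL_of_ge _ _ (le_trans hyy'le hy'm))
        (maxL_of_le _ _ (le_trans hxx'le hx'm))
    refine ⟨symm, ?_⟩
    -- transitivity
    intro a b c hab hbc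
    have hba := symm a b hab
    have hcb := symm b c hbc
    have hba1 : Θ (s b a) one := by
      refine A' _ ?_
      have := hstar a b a a hab (hrefl a)
      rwa [sxx] at this
    have hcb1 : Θ (s c b) one := by
      refine A' _ ?_
      have := hstar b c b b hbc (hrefl b)
      rwa [sxx] at this
    obtain ⟨w, hw, t, ht, hwt⟩ := hmax (s b a) one (s c b) one hba1 hcb1
    rw [maxL_of_le _ _ (htop one), Set.mem_singleton_iff] at ht
    rw [ht] at hwt
    have hwle := (lpair w (s b a) (s c b)).1 hw.1
    have h1w : Θ one w := A _ hwt
    have hae : Θ a (s w a) := by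
      have := hstar one w a a h1w (hrefl a)
      rwa [sone] at this
    have hea : Θ (s w a) a := by
      have := hstar w one a a hwt (hrefl a)
      rwa [sone] at this
    have hce : c ≤ s w a := by
      refine s_le_of w a c ?_
      intro t htw htc
      have htb : t ≤ b := down c b t htc (le_trans htw hwle.2)
      exact down b a t htb (le_trans htw hwle.1)
    -- mirror construction
    have hbc1 : Θ (s b c) one := by
      refine A' _ ?_
      have := hstar c b c c hcb (hrefl c)
      rwa [sxx] at this
    have hab1 : Θ (s a b) one := by
      refine A' _ ?_
      have := hstar b a b b hba (hrefl b)
      rwa [sxx] at this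
    obtain ⟨w', hw', t', ht', hwt'⟩ := hmax (s b c) one (s a b) one hbc1 hab1
    rw [maxL_of_le _ _ (htop one), Set.mem_singleton_iff] at ht'
    rw [ht'] at hwt'
    have hwle' := (lpair w' (s b c) (s a b)).1 hw'.1
    have h1w' : Θ one w' := A _ hwt'
    have hcf : Θ c (s w' c) := by
      have := hstar one w' c c h1w' (hrefl c)
      rwa [sone] at this
    have hfc : Θ (s w' c) c := by
      have := hstar w' one c c hwt' (hrefl c)
      rwa [sone] at this
    have haf : a ≤ s w' c := by
      refine s_le_of w' c a ?_
      intro t htw hta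
      have htb : t ≤ b := down a b t hta (le_trans htw hwle'.2)
      exact down b c t htb (le_trans htw hwle'.1)
    -- link e and f, then merge
    have hef : Θ (s w a) (s w' c) :=
      hminU hea hcf (minU_of_ge _ _ hce) (minU_of_le _ _ haf)
    have hfe : Θ (s w' c) (s w a) :=
      hminU hfc hae (minU_of_ge _ _ haf) (minU_of_le _ _ hce)
    obtain ⟨m, hem, hfm, h3, h4, h5, h6⟩ := M (s w a) (s w' c) hef hfe
    have hma : Θ m a := C a (s w a) m (le_s _ _) hem hea h3
    have hcm : Θ c m := C' c (s w' c) m (le_s _ _) hfm hcf h6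
    have hca : Θ c a :=
      hmaxL hma hcm (maxL_of_ge _ _ (le_trans hce hem)) (maxL_of_le _ _ (le_trans (le_s w a) hem))
    exact symm c a hca
  -- assemble
  have htop' : ∀ x z : P, z ≤ s x x := fun x z => s_le_of x x z (fun t h1 _ => h1)
  have equiv : Equivalence Θ :=
    ⟨hrefl, fun {x y} h => (core (s x x) (htop' x)).1 x y h,
      fun {x y z} h1 h2 => (core (s x x) (htop' x)).2 x y z h1 h2⟩
  exact ⟨equiv, equiv, hmax, hmin⟩
end

section
/- Let (P,≤,*) be a relatively pseudocomplemented poset with greatest element 1, let Θ be an equivalence relation on P compatible with the operation * (i.e. (a₁,b₁),(a₂,b₂) ∈ Θ imply (a₁*a₂, b₁*b₂) ∈ Θ), and let a,b ∈ P. Then: (i) if (a,b) ∈ Θ then a*b ∈ [1]Θ and b*a ∈ [1]Θ; (ii) if a*b ∈ [1]Θ, b*a ∈ [1]Θ and ((a*b)*b, (b*a)*a) ∈ Θ, then (a,b) ∈ Θ. -/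
/- Common definitions for congruences on posets. -/

variable {P : Type*}

theorem stmt12 [PartialOrder P] (s : P → P → P)
    (hs : ∀ x y : P, IsGreatest {z : P | lowerBounds {x, z} ⊆ lowerBounds {y}} (s x y))
    (one : P) (hone : ∀ x : P, x ≤ one)
    (Θ : P → P → Prop) (hΘ : Equivalence Θ)
    (hstar : ∀ a₁ b₁ a₂ b₂ : P, Θ a₁ b₁ → Θ a₂ b₂ → Θ (s a₁ a₂) (s b₁ b₂))
    (a b : P) :
    (Θ a b → s a b ∈ cls Θ one ∧ s b a ∈ cls Θ one) ∧
    (s a b ∈ cls Θ one → s b a ∈ cls Θ one → Θ (s (s a b) b) (s (s b a) a) → Θ a b) := by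

  -- key lemmas
  have hxx : ∀ x : P, s x x = one := by
    intro x
    have h1 : one ∈ {z : P | lowerBounds {x, z} ⊆ lowerBounds {x}} := by
      intro t ht u hu
      simp at hu; subst hu
      exact ht (Set.mem_insert _ _)
    exact le_antisymm (hone _) ((hs x x).2 h1)
  have h1x : ∀ x : P, s one x = x := by
    intro x
    have hmem : x ∈ {z : P | lowerBounds {one, z} ⊆ lowerBounds {x}} := by
      intro t ht u hu
      simp at hu; subst hu
      exact ht (Set.mem_insert_of_mem _ rfl)
    have h1 : x ≤ s one x := (hs one x).2 hmem
    have h2 : s one x ≤ x := by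
      have hself : s one x ∈ lowerBounds {one, s one x} := by
        intro u hu
        rcases hu with rfl | hu
        · exact hone _
        · simp at hu; subst hu; exact le_rfl
      have := (hs one x).1 hself
      simpa using this
    exact le_antisymm h2 h1
  constructor
  · intro hab
    constructor
    · have := hstar a b b b hab (hΘ.refl b)
      rw [hxx] at this
      exact hΘ.symm this
    · have := hstar b a a a (hΘ.symm hab) (hΘ.refl a)
      rw [hxx] at this
      exact hΘ.symm this
  · intro h1 h2 h3
    have hb : Θ b (s (s a b) b) := by
      have := hstar one (s a b) b b h1 (hΘ.refl b)
      rwa [h1x] at this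
    have ha : Θ a (s (s b a) a) := by
      have := hstar one (s b a) a a h2 (hΘ.refl a)
      rwa [h1x] at this
    exact hΘ.trans ha (hΘ.trans (hΘ.symm h3) (hΘ.symm hb))
end

section
/- Let (P,≤,*) be a relatively pseudocomplemented poset with greatest element 1 and define t₂(x,y₁,y₂) := (y₁*(y₂*x))*x. Then: (i) t₂ is an ideal term in y₁,y₂, i.e. t₂(a,1,1) = 1 for all a ∈ P; (ii) if D ⊆ P contains 1 and is closed with respect to t₂ (i.e. t₂(a,b₁,b₂) ∈ D for all a ∈ P and b₁,b₂ ∈ D), then D is a deductive system of P; (iii) if Θ is a congruence on (P,≤,*), then [1]Θ contains 1 and is closed with respect to t₂. -/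
/-!
Both `1 * x = x` and `x * x = 1` hold in a relatively pseudocomplemented poset. Hence
`t₂(a, 1, 1) = a * a = 1`, and `t₂(y, x * y, x) = ((x * y) * (x * y)) * y = 1 * y = y`, which turns
closure under `t₂` into the deductive-system rule. Since a congruence `Θ` is reflexive and
compatible with `*`, relating `b₁, b₂` to `1` relates `t₂(a, b₁, b₂)` to `t₂(a, 1, 1) = 1`.
-/

variable {P : Type*}

def IsRelPseudocompl [PartialOrder P] (s : P → P → P) : Prop :=
  ∀ x y : P, IsGreatest {z : P | lowerBounds {x, z} ⊆ lowerBounds {y}} (s x y)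

def t₂ (s : P → P → P) (x y₁ y₂ : P) : P := s (s y₁ (s y₂ x)) x

namespace IsRelPseudocompl

variable [PartialOrder P] {s : P → P → P}

theorem le_iff (hs : IsRelPseudocompl s) {x y z : P} :
    z ≤ s x y ↔ ∀ w, w ≤ x → w ≤ z → w ≤ y := by
  have mem_iff : ∀ z, z ∈ {z : P | lowerBounds {x, z} ⊆ lowerBounds {y}} ↔
      ∀ w, w ≤ x → w ≤ z → w ≤ y := fun z => by
    simp only [Set.mem_ofPred_eq, lowerBounds_insert, lowerBounds_singleton, Set.subset_def,
      Set.mem_inter_iff, Set.mem_Iic, and_imp]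
  refine ⟨fun h w hwx hwz => (mem_iff _).1 (hs x y).1 w hwx (hwz.trans h), fun h => ?_⟩
  exact (hs x y).2 ((mem_iff z).2 h)

theorem self_eq_top (hs : IsRelPseudocompl s) {one : P} (hone : IsTop one) (x : P) :
    s x x = one :=
  (hone _).antisymm (hs.le_iff.2 fun _ hwx _ => hwx)

theorem top_left (hs : IsRelPseudocompl s) {one : P} (hone : IsTop one) (a : P) :
    s one a = a :=
  (hs.le_iff.1 le_rfl _ (hone _) le_rfl).antisymm (hs.le_iff.2 fun _ _ hwa => hwa)

theorem t₂_top_top (hs : IsRelPseudocompl s) {one : P} (hone : IsTop one) (a : P) :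
    t₂ s a one one = one := by
  rw [t₂, hs.top_left hone, hs.top_left hone, hs.self_eq_top hone]

theorem t₂_himp (hs : IsRelPseudocompl s) {one : P} (hone : IsTop one) (x y : P) :
    t₂ s y (s x y) x = y := by
  rw [t₂, hs.self_eq_top hone, hs.top_left hone]

end IsRelPseudocompl

theorem rel_t₂_of_rel {s : P → P → P} {Θ : P → P → Prop} (hrefl : ∀ x, Θ x x)
    (hcomp : ∀ a₁ b₁ a₂ b₂ : P, Θ a₁ b₁ → Θ a₂ b₂ → Θ (s a₁ a₂) (s b₁ b₂))
    {a c₁ c₂ b₁ b₂ : P} (h₁ : Θ c₁ b₁) (h₂ : Θ c₂ b₂) :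
    Θ (t₂ s a c₁ c₂) (t₂ s a b₁ b₂) :=
  hcomp _ _ _ _ (hcomp _ _ _ _ h₁ (hcomp _ _ _ _ h₂ (hrefl a))) (hrefl a)

theorem stmt13 [PartialOrder P] (s : P → P → P)
    (hs : ∀ x y : P, IsGreatest {z : P | lowerBounds {x, z} ⊆ lowerBounds {y}} (s x y))
    (one : P) (hone : ∀ x : P, x ≤ one) :
    (∀ a : P, s (s one (s one a)) a = one) ∧
    (∀ D : Set P, one ∈ D →
      (∀ a : P, ∀ b₁ ∈ D, ∀ b₂ ∈ D, s (s b₁ (s b₂ a)) a ∈ D) →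
      (one ∈ D ∧ ∀ x ∈ D, ∀ y : P, s x y ∈ D → y ∈ D)) ∧
    (∀ Θ : P → P → Prop, IsCong Θ →
      (∀ a₁ b₁ a₂ b₂ : P, Θ a₁ b₁ → Θ a₂ b₂ → Θ (s a₁ a₂) (s b₁ b₂)) →
      (one ∈ cls Θ one ∧
        ∀ a : P, ∀ b₁ ∈ cls Θ one, ∀ b₂ ∈ cls Θ one, s (s b₁ (s b₂ a)) a ∈ cls Θ one)) := by
  have hs : IsRelPseudocompl s := hs
  refine ⟨hs.t₂_top_top hone, fun D hD hclosed => ⟨hD, fun x hx y hxy => ?_⟩,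
    fun Θ ⟨hequiv, _, _⟩ hcomp => ⟨hequiv.refl one, fun a b₁ hb₁ b₂ hb₂ => ?_⟩⟩
  · have h : t₂ s y (s x y) x ∈ D := hclosed y _ hxy x hx
    rwa [hs.t₂_himp hone] at h
  · have h := rel_t₂_of_rel (a := a) hequiv.refl hcomp hb₁ hb₂
    rwa [hs.t₂_top_top hone] at h
end

section
/- Let (P,≤,*) be a relatively pseudocomplemented poset with greatest element 1, D a deductive system of P, and Θ a congruence on (P,≤,*). Then D is a filter of (P,≤,*) (i.e. a nonempty upward-closed subset with x*y ∈ D for all x,y ∈ D), and [1]Θ is a strong filter of (P,≤,*) (i.e. a filter of (P,≤,*) with L({x,y}) ∩ [1]Θ ≠ ∅ for all x,y ∈ [1]Θ). -/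
/- Common definitions for congruences on posets. -/

variable {P : Type*}

theorem stmt14 [PartialOrder P] (s : P → P → P)
    (hs : ∀ x y : P, IsGreatest {z : P | lowerBounds {x, z} ⊆ lowerBounds {y}} (s x y))
    (one : P) (hone : ∀ x : P, x ≤ one)
    (D : Set P) (hD1 : one ∈ D) (hD2 : ∀ x ∈ D, ∀ y : P, s x y ∈ D → y ∈ D)
    (Θ : P → P → Prop) (hΘ : IsCong Θ)
    (hstar : ∀ a₁ b₁ a₂ b₂ : P, Θ a₁ b₁ → Θ a₂ b₂ → Θ (s a₁ a₂) (s b₁ b₂)) :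
    (D.Nonempty ∧ (∀ x ∈ D, ∀ y : P, x ≤ y → y ∈ D) ∧ (∀ x ∈ D, ∀ y ∈ D, s x y ∈ D)) ∧
    ((cls Θ one).Nonempty ∧
      (∀ x ∈ cls Θ one, ∀ y : P, x ≤ y → y ∈ cls Θ one) ∧
      (∀ x ∈ cls Θ one, ∀ y ∈ cls Θ one, s x y ∈ cls Θ one) ∧
      (∀ x ∈ cls Θ one, ∀ y ∈ cls Θ one, (lowerBounds {x, y} ∩ cls Θ one).Nonempty)) := by
  -- basic facts
  have hle : ∀ x y : P, y ≤ s x y := by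
    intro x y
    exact (hs x y).2 (fun z hz => by
      intro w hw; rcases hw with rfl; exact hz (by simp))
  have himp : ∀ x y : P, x ≤ y → s x y = one := by
    intro x y hxy
    refine le_antisymm (hone _) ((hs x y).2 ?_)
    intro z hz w hw
    rcases hw with rfl
    exact le_trans (hz (by simp)) hxy
  have hsone : ∀ y : P, s one y = y := by
    intro y
    refine le_antisymm ?_ (hle one y)
    have h1 := (hs one y).1
    have : s one y ∈ lowerBounds {one, s one y} := by
      intro w hw; rcases hw with rfl | rfl; exacts [hone _, le_rfl]
    exact h1 this rfl
  -- generic deductive system → filter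
  have main : ∀ E : Set P, one ∈ E → (∀ x ∈ E, ∀ y : P, s x y ∈ E → y ∈ E) →
      (E.Nonempty ∧ (∀ x ∈ E, ∀ y : P, x ≤ y → y ∈ E) ∧ (∀ x ∈ E, ∀ y ∈ E, s x y ∈ E)) := by
    intro E h1 h2
    have hup : ∀ x ∈ E, ∀ y : P, x ≤ y → y ∈ E := by
      intro x hx y hxy
      exact h2 x hx y (by rw [himp x y hxy]; exact h1)
    exact ⟨⟨one, h1⟩, hup, fun x hx y hy => hup y hy _ (hle x y)⟩
  obtain ⟨heq, hmaxl, _⟩ := hΘ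
  have hc1 : one ∈ cls Θ one := heq.refl one
  have hc2 : ∀ x ∈ cls Θ one, ∀ y : P, s x y ∈ cls Θ one → y ∈ cls Θ one := by
    intro x hx y hsy
    have h3 : Θ (s x y) (s one y) := hstar x one y y (heq.symm hx) (heq.refl y)
    rw [hsone] at h3
    exact heq.trans hsy h3
  refine ⟨main D hD1 hD2, ?_⟩
  obtain ⟨hn, hup, hcl⟩ := main (cls Θ one) hc1 hc2
  refine ⟨hn, hup, hcl, ?_⟩
  intro x hx y hy
  obtain ⟨a, ha, b, hb, hab⟩ := hmaxl one x one y hx hy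
  have haone : a = one := by
    have := ha.2 one (fun w hw => by rcases hw with rfl | rfl; exacts [le_rfl, le_rfl]) (hone a)
    exact this
  exact ⟨b, hb.1, haone ▸ hab⟩
end

section
/- Let (P,≤,*) be a relatively pseudocomplemented poset, a,b ∈ P, and F a strong filter of (P,≤,*). Define the relation Θ_F on P by (x,y) ∈ Θ_F if there exist c,d ∈ F with L({x,c,d}) = L({y,c,d}). Then (a,b) ∈ Θ_F if and only if a*b ∈ F and b*a ∈ F. -/
/- Common definitions for congruences on posets. -/

variable {P : Type*}

lemma mem_lb3 [PartialOrder P] {t x c d : P} :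
    t ∈ lowerBounds {x, c, d} ↔ t ≤ x ∧ t ≤ c ∧ t ≤ d := by
  constructor
  · intro h; exact ⟨h (by simp), h (by simp), h (by simp)⟩
  · rintro ⟨h1, h2, h3⟩ u hu
    rcases hu with rfl | rfl | rfl <;> assumption

lemma mem_lb2 [PartialOrder P] {t x c : P} :
    t ∈ lowerBounds {x, c} ↔ t ≤ x ∧ t ≤ c := by
  constructor
  · intro h; exact ⟨h (by simp), h (by simp)⟩
  · rintro ⟨h1, h2⟩ u hu
    rcases hu with rfl | rfl <;> assumption

theorem stmt15 [PartialOrder P] (s : P → P → P)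
    (hs : ∀ x y : P, IsGreatest {z : P | lowerBounds {x, z} ⊆ lowerBounds {y}} (s x y))
    (F : Set P) (hF0 : F.Nonempty)
    (hF1 : ∀ x ∈ F, ∀ y : P, x ≤ y → y ∈ F)
    (hF2 : ∀ x ∈ F, ∀ y ∈ F, s x y ∈ F)
    (hF3 : ∀ x ∈ F, ∀ y ∈ F, (lowerBounds {x, y} ∩ F).Nonempty)
    (a b : P) :
    (∃ c ∈ F, ∃ d ∈ F, lowerBounds {a, c, d} = lowerBounds {b, c, d}) ↔
      (s a b ∈ F ∧ s b a ∈ F) := by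
  constructor
  · rintro ⟨c, hc, d, hd, hcd⟩
    obtain ⟨e, he, heF⟩ := hF3 c hc d hd
    rw [mem_lb2] at he
    have key : ∀ x y : P, lowerBounds {x, c, d} = lowerBounds {y, c, d} → s x y ∈ F := by
      intro x y h
      refine hF1 e heF _ ((hs x y).2 ?_)
      intro t ht
      rw [mem_lb2] at ht
      have : t ∈ lowerBounds {x, c, d} :=
        mem_lb3.2 ⟨ht.1, ht.2.trans he.1, ht.2.trans he.2⟩
      rw [h, mem_lb3] at this
      intro u hu; rcases hu with rfl; exact this.1
    exact ⟨key a b hcd, key b a hcd.symm⟩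
  · rintro ⟨h1, h2⟩
    refine ⟨s a b, h1, s b a, h2, ?_⟩
    have key : ∀ x y : P, lowerBounds {x, s x y, s y x} ⊆ lowerBounds {y, s x y, s y x} := by
      intro x y t ht
      rw [mem_lb3] at ht
      have hty : t ≤ y := (hs x y).1 (mem_lb2.2 ⟨ht.1, ht.2.1⟩) (by simp)
      exact mem_lb3.2 ⟨hty, ht.2.1, ht.2.2⟩
    apply Set.Subset.antisymm (key a b)
    intro t ht
    rw [mem_lb3] at ht ⊢
    have := key b a (mem_lb3.2 ⟨ht.1, ht.2.2, ht.2.1⟩)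
    rw [mem_lb3] at this
    exact ⟨this.1, this.2.2, this.2.1⟩
end

section
/- Let (P,≤,',0,1) be a Boolean poset satisfying both the Ascending Chain Condition and the Descending Chain Condition, and let Θ be a reflexive binary relation on P that is compatible with the binary operators (x,y) ↦ Max L(x,y) and (x,y) ↦ Min U(x,y) and with the unary operation ' (i.e. (a,b) ∈ Θ implies (a',b') ∈ Θ). Then Θ is an equivalence relation, hence a congruence on (P,≤,',0,1). -/
/- Common definitions for congruences on posets. -/

variable {P : Type*}

section Aux

variable [PartialOrder P]

lemma aux_lb (x y w : P) : w ∈ lowerBounds {x, y} ↔ w ≤ x ∧ w ≤ y := by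
  simp [lowerBounds]

lemma aux_ub (x y w : P) : w ∈ upperBounds {x, y} ↔ x ≤ w ∧ y ≤ w := by
  simp [upperBounds]

lemma aux_maxL_left {z x : P} (h : z ≤ x) : MaxL z x = {z} := by
  ext w
  simp only [MaxL, MaxEl, Set.mem_setOf_eq, Set.mem_singleton_iff]
  constructor
  · rintro ⟨hw, hmaxw⟩
    exact hmaxw z ((aux_lb _ _ _).mpr ⟨le_refl z, h⟩) ((aux_lb _ _ _).mp hw).1
  · rintro rfl
    exact ⟨(aux_lb _ _ _).mpr ⟨le_refl _, h⟩,
      fun y hy hzy => le_antisymm hzy ((aux_lb _ _ _).mp hy).1⟩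

lemma aux_maxL_right {z x : P} (h : z ≤ x) : MaxL x z = {z} := by
  ext w
  simp only [MaxL, MaxEl, Set.mem_setOf_eq, Set.mem_singleton_iff]
  constructor
  · rintro ⟨hw, hmaxw⟩
    exact hmaxw z ((aux_lb _ _ _).mpr ⟨h, le_refl z⟩) ((aux_lb _ _ _).mp hw).2
  · rintro rfl
    exact ⟨(aux_lb _ _ _).mpr ⟨h, le_refl _⟩,
      fun y hy hzy => le_antisymm hzy ((aux_lb _ _ _).mp hy).2⟩

lemma aux_minU_left {z x : P} (h : z ≤ x) : MinU z x = {x} := by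
  ext w
  simp only [MinU, MinEl, Set.mem_setOf_eq, Set.mem_singleton_iff]
  constructor
  · rintro ⟨hw, hminw⟩
    exact hminw x ((aux_ub _ _ _).mpr ⟨h, le_refl x⟩) ((aux_ub _ _ _).mp hw).2
  · rintro rfl
    exact ⟨(aux_ub _ _ _).mpr ⟨h, le_refl _⟩,
      fun y hy hyx => le_antisymm ((aux_ub _ _ _).mp hy).2 hyx⟩

lemma aux_minU_right {z x : P} (h : z ≤ x) : MinU x z = {x} := by
  ext w
  simp only [MinU, MinEl, Set.mem_setOf_eq, Set.mem_singleton_iff]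
  constructor
  · rintro ⟨hw, hminw⟩
    exact hminw x ((aux_ub _ _ _).mpr ⟨le_refl x, h⟩) ((aux_ub _ _ _).mp hw).1
  · rintro rfl
    exact ⟨(aux_ub _ _ _).mpr ⟨le_refl _, h⟩,
      fun y hy hyx => le_antisymm ((aux_ub _ _ _).mp hy).1 hyx⟩

lemma aux_maxL_bot [OrderBot P] {x y : P} (h : ∀ w : P, w ≤ x → w ≤ y → w = ⊥) :
    MaxL x y = {⊥} := by
  ext w
  simp only [MaxL, MaxEl, Set.mem_setOf_eq, Set.mem_singleton_iff]
  constructor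
  · rintro ⟨hw, _⟩
    exact h w ((aux_lb _ _ _).mp hw).1 ((aux_lb _ _ _).mp hw).2
  · rintro rfl
    exact ⟨(aux_lb _ _ _).mpr ⟨bot_le, bot_le⟩,
      fun v hv _ => (h v ((aux_lb _ _ _).mp hv).1 ((aux_lb _ _ _).mp hv).2).symm⟩

/-- ACC implies every nonempty set has a maximal element. -/
lemma aux_exmax (hACC : ¬ ∃ f : ℕ → P, StrictMono f) (S : Set P) (hS : S.Nonempty) :
    ∃ m, m ∈ S ∧ ∀ v ∈ S, m ≤ v → m = v := by
  classical
  by_contra h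
  push_neg at h
  obtain ⟨s0, hs0⟩ := hS
  have hstep : ∀ p : {x // x ∈ S}, ∃ q : {x // x ∈ S}, p.1 < q.1 := by
    rintro ⟨p, hp⟩
    obtain ⟨v, hv, hle, hne⟩ := h p hp
    exact ⟨⟨v, hv⟩, lt_of_le_of_ne hle hne⟩
  choose next hnext using hstep
  refine hACC ⟨fun n => (next^[n] ⟨s0, hs0⟩).1, strictMono_nat_of_lt_succ ?_⟩
  intro n
  rw [Function.iterate_succ_apply']
  exact hnext _

end Aux

theorem stmt17 [PartialOrder P] [BoundedOrder P] (c : P → P)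
    (hcompl : ∀ x : P, upperBounds {x, c x} = {(⊤ : P)} ∧ lowerBounds {x, c x} = {(⊥ : P)})
    (hdist : ∀ x y z : P, lowerBounds (upperBounds {x, y} ∪ {z}) =
      lowerBounds (upperBounds (lowerBounds {x, z} ∪ lowerBounds {y, z})))
    (hACC : ¬ ∃ f : ℕ → P, StrictMono f) (hDCC : ¬ ∃ f : ℕ → P, StrictAnti f)
    (Θ : P → P → Prop) (hrefl : ∀ x : P, Θ x x)
    (hmax : Compat Θ MaxL) (hmin : Compat Θ MinU)
    (hc : ∀ a b : P, Θ a b → Θ (c a) (c b)) :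
    Equivalence Θ ∧ (IsCong Θ ∧ ∀ a b : P, Θ a b → Θ (c a) (c b)) := by
  classical
  -- x and c x have no common lower bound except ⊥
  have lbc : ∀ x w : P, w ≤ x → w ≤ c x → w = ⊥ := by
    intro x w h1 h2
    have hmem : w ∈ lowerBounds {x, c x} := (aux_lb _ _ _).mpr ⟨h1, h2⟩
    rw [(hcompl x).2] at hmem
    exact hmem
  -- complement of ⊥ is ⊤
  have cbot : c (⊥ : P) = ⊤ := by
    have h : c (⊥ : P) ∈ upperBounds {(⊥ : P), c ⊥} := (aux_ub _ _ _).mpr ⟨bot_le, le_refl _⟩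
    rw [(hcompl ⊥).1] at h
    exact h
  -- THE CUT LEMMA (from distributivity): if every common lower bound of (x, r) and every
  -- common lower bound of (c x, r) is ≤ s, then r ≤ s.
  have CUT : ∀ x r s : P, (∀ w, w ≤ x → w ≤ r → w ≤ s) → (∀ w, w ≤ c x → w ≤ r → w ≤ s) →
      r ≤ s := by
    intro x r s h1 h2
    have hr : r ∈ lowerBounds (upperBounds {x, c x} ∪ {r}) := by
      intro w hw
      rcases hw with hw | hw
      · rw [(hcompl x).1] at hw
        rw [Set.mem_singleton_iff] at hw
        exact hw ▸ le_top
      · rw [Set.mem_singleton_iff] at hw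
        exact le_of_eq hw.symm
    rw [hdist x (c x) r] at hr
    apply hr
    intro w hw
    rcases hw with hw | hw
    · obtain ⟨ha, hb⟩ := (aux_lb _ _ _).mp hw
      exact h1 w ha hb
    · obtain ⟨ha, hb⟩ := (aux_lb _ _ _).mp hw
      exact h2 w ha hb
  -- reversal at ⊥
  have REV1 : ∀ z : P, Θ z ⊥ → Θ ⊥ z := by
    intro z hz
    have h2 : Θ (c z) ⊤ := by have := hc z ⊥ hz; rwa [cbot] at this
    obtain ⟨a, ha, b, hb, hab⟩ := hmax z z (c z) ⊤ (hrefl z) h2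
    rw [aux_maxL_bot (fun w hw1 hw2 => lbc z w hw1 hw2), Set.mem_singleton_iff] at ha
    rw [aux_maxL_left le_top, Set.mem_singleton_iff] at hb
    exact ha ▸ hb ▸ hab
  have REV2 : ∀ z : P, Θ ⊥ z → Θ z ⊥ := by
    intro z hz
    have h2 : Θ ⊤ (c z) := by have := hc ⊥ z hz; rwa [cbot] at this
    obtain ⟨a, ha, b, hb, hab⟩ := hmax z z ⊤ (c z) (hrefl z) h2
    rw [aux_maxL_left le_top, Set.mem_singleton_iff] at ha
    rw [aux_maxL_bot (fun w hw1 hw2 => lbc z w hw1 hw2), Set.mem_singleton_iff] at hb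
    exact ha ▸ hb ▸ hab
  -- difference lemmas: differences of Θ-related pairs are collapsed to ⊥
  have D1 : ∀ x y z : P, Θ x y → z ≤ x → z ≤ c y → Θ z ⊥ := by
    intro x y z hxy h1 h2
    obtain ⟨a, ha, b, hb, hab⟩ := hmax z z x y (hrefl z) hxy
    rw [aux_maxL_left h1, Set.mem_singleton_iff] at ha
    rw [aux_maxL_bot (fun w hwz hwy => lbc y w hwy (le_trans hwz h2)),
      Set.mem_singleton_iff] at hb
    exact ha ▸ hb ▸ hab
  have D2 : ∀ x y z : P, Θ x y → z ≤ c x → z ≤ y → Θ z ⊥ := by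
    intro x y z hxy h1 h2
    obtain ⟨a, ha, b, hb, hab⟩ := hmax x y z z hxy (hrefl z)
    rw [aux_maxL_bot (fun w hwx hwz => lbc x w hwx (le_trans hwz h1)),
      Set.mem_singleton_iff] at ha
    rw [aux_maxL_right h2, Set.mem_singleton_iff] at hb
    exact REV2 z (ha ▸ hb ▸ hab)
  -- the ideal I = {z | Θ z ⊥} has a maximal element d which is in fact a maximum
  obtain ⟨d, hd, hdmax⟩ := aux_exmax hACC {z | Θ z ⊥} ⟨⊥, hrefl ⊥⟩
  have hbd : Θ ⊥ d := REV1 d hd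
  have Iabs : ∀ z : P, Θ z ⊥ → z ≤ d := by
    intro z hz
    obtain ⟨a, ha, b, hb, hab⟩ := hmin d ⊥ z ⊥ hd hz
    rw [aux_minU_left (le_refl (⊥ : P)), Set.mem_singleton_iff] at hb
    have hda : d ≤ a := ((aux_ub _ _ _).mp ha.1).1
    have hza : z ≤ a := ((aux_ub _ _ _).mp ha.1).2
    have hda' : d = a := hdmax a (hb ▸ hab) hda
    exact hda' ▸ hza
  -- right-class maxima
  have CLSR : ∀ x : P, ∃ r, Θ x r ∧ x ≤ r ∧ d ≤ r ∧ ∀ v, Θ x v → v ≤ r := by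
    intro x
    obtain ⟨r, hr, hrmax⟩ := aux_exmax hACC {v | Θ x v} ⟨x, hrefl x⟩
    have habs : ∀ v, Θ x v → v ≤ r := by
      intro v hv
      obtain ⟨a, ha, b, hb, hab⟩ := hmin x r x v hr hv
      rw [aux_minU_left (le_refl x), Set.mem_singleton_iff] at ha
      have hrb : r ≤ b := ((aux_ub _ _ _).mp hb.1).1
      have hvb : v ≤ b := ((aux_ub _ _ _).mp hb.1).2
      have hrb' : r = b := hrmax b (ha ▸ hab) hrb
      exact hrb' ▸ hvb
    have hdr : d ≤ r := by
      obtain ⟨a, ha, b, hb, hab⟩ := hmin x r ⊥ d hr hbd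
      rw [aux_minU_right bot_le, Set.mem_singleton_iff] at ha
      have hdb : d ≤ b := ((aux_ub _ _ _).mp hb.1).2
      exact le_trans hdb (habs b (ha ▸ hab))
    exact ⟨r, hr, habs x (hrefl x), hdr, habs⟩
  -- left-class maxima
  have CLSL : ∀ y : P, ∃ r, Θ r y ∧ y ≤ r ∧ d ≤ r ∧ ∀ w, Θ w y → w ≤ r := by
    intro y
    obtain ⟨r, hr, hrmax⟩ := aux_exmax hACC {w | Θ w y} ⟨y, hrefl y⟩
    have habs : ∀ w, Θ w y → w ≤ r := by
      intro w hw
      obtain ⟨a, ha, b, hb, hab⟩ := hmin r y w y hr hw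
      rw [aux_minU_left (le_refl y), Set.mem_singleton_iff] at hb
      have hra : r ≤ a := ((aux_ub _ _ _).mp ha.1).1
      have hwa : w ≤ a := ((aux_ub _ _ _).mp ha.1).2
      have hra' : r = a := hrmax a (hb ▸ hab) hra
      exact hra' ▸ hwa
    have hdr : d ≤ r := by
      obtain ⟨a, ha, b, hb, hab⟩ := hmin d ⊥ r y hd hr
      rw [aux_minU_left bot_le, Set.mem_singleton_iff] at hb
      have hda : d ≤ a := ((aux_ub _ _ _).mp ha.1).1
      exact le_trans hda (habs a (hb ▸ hab))
    exact ⟨r, hr, habs y (hrefl y), hdr, habs⟩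
  -- THE MAIN LEMMA: if all "differences" of x and y are below d, then Θ x y
  have G : ∀ x y : P, (∀ z, z ≤ x → z ≤ c y → z ≤ d) → (∀ z, z ≤ c x → z ≤ y → z ≤ d) →
      Θ x y := by
    intro x y H1 H2
    obtain ⟨r₁, hxr₁, hxler₁, hdr₁, habs₁⟩ := CLSR x
    obtain ⟨r₂, hr₂y, hyler₂, hdr₂, habs₂⟩ := CLSL y
    have hxr₂ : x ≤ r₂ := CUT y x r₂ (fun w hwy _ => le_trans hwy hyler₂)
      (fun w hwcy hwx => le_trans (H1 w hwx hwcy) hdr₂)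
    have hyr₁ : y ≤ r₁ := CUT x y r₁ (fun w hwx _ => le_trans hwx hxler₁)
      (fun w hwcx hwy => le_trans (H2 w hwcx hwy) hdr₁)
    have h12 : r₁ ≤ r₂ := CUT x r₁ r₂ (fun w hwx _ => le_trans hwx hxr₂)
      (fun w hwcx hwr => le_trans (Iabs w (D2 x r₁ w hxr₁ hwcx hwr)) hdr₂)
    have h21 : r₂ ≤ r₁ := CUT y r₂ r₁ (fun w hwy _ => le_trans hwy hyr₁)
      (fun w hwcy hwr => le_trans (Iabs w (D1 r₂ y w hr₂y hwr hwcy)) hdr₁)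
    have hrr : r₁ = r₂ := le_antisymm h12 h21
    obtain ⟨a, ha, b, hb, hab⟩ := hmax x r₁ r₂ y hxr₁ hr₂y
    rw [aux_maxL_left hxr₂, Set.mem_singleton_iff] at ha
    rw [aux_maxL_right hyr₁, Set.mem_singleton_iff] at hb
    exact ha ▸ hb ▸ hab
  -- symmetry
  have SYM : ∀ a b : P, Θ a b → Θ b a := by
    intro a b hab
    apply G b a
    · intro z hzb hzca
      exact Iabs z (D2 a b z hab hzca hzb)
    · intro z hzcb hza
      exact Iabs z (D1 a b z hab hza hzcb)
  -- transitivity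
  have TRANS : ∀ a b e : P, Θ a b → Θ b e → Θ a e := by
    intro a b e hab hbe
    apply G a e
    · intro z hza hzce
      exact CUT b z d (fun w hwb hwz => Iabs w (D1 b e w hbe hwb (le_trans hwz hzce)))
        (fun w hwcb hwz => Iabs w (D1 a b w hab (le_trans hwz hza) hwcb))
    · intro z hzca hze
      exact CUT b z d (fun w hwb hwz => Iabs w (D2 a b w hab (le_trans hwz hzca) hwb))
        (fun w hwcb hwz => Iabs w (D2 b e w hbe hwcb (le_trans hwz hze)))
  have hequiv : Equivalence Θ :=
    ⟨hrefl, fun {x y} h => SYM x y h, fun {x y z} h1 h2 => TRANS x y z h1 h2⟩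
  exact ⟨hequiv, ⟨⟨hequiv, hmax, hmin⟩, hc⟩⟩
end

section
/- Let (P,≤,',0,1) be a Boolean poset, a,b ∈ P, and Θ a congruence on (P,≤,',0,1). Then: (i) if (a,b) ∈ Θ then Min U(a,b') ∩ [1]Θ ≠ ∅; (ii) if a ≤ b and L(U({a,b'})) ∩ [1]Θ ≠ ∅ then (a,b) ∈ Θ; (iii) if a ≤ b and the join a ∨ b' exists in P, then (a,b) ∈ Θ if and only if a ∨ b' ∈ [1]Θ. -/
/- Common definitions for congruences on posets. -/

variable {P : Type*}

section helpers
variable [PartialOrder P]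

lemma lb_pair {a b : P} (h : a ≤ b) : lowerBounds {a, b} = Set.Iic a := by
  ext x
  constructor
  · intro hx; exact hx (Set.mem_insert _ _)
  · intro hx y hy
    rcases hy with rfl | hy
    · exact hx
    · rw [Set.mem_singleton_iff] at hy; subst hy; exact le_trans hx h

lemma maxEl_Iic (a : P) : MaxEl (Set.Iic a) = {a} := by
  ext x
  constructor
  · rintro ⟨hx, hmax⟩; exact hmax a le_rfl hx
  · rintro rfl; exact ⟨le_rfl, fun y hy hxy => le_antisymm hxy hy⟩

end helpers

theorem stmt18 [PartialOrder P] [BoundedOrder P] (c : P → P)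
    (hcompl : ∀ x : P, upperBounds {x, c x} = {(⊤ : P)} ∧ lowerBounds {x, c x} = {(⊥ : P)})
    (hdist : ∀ x y z : P, lowerBounds (upperBounds {x, y} ∪ {z}) =
      lowerBounds (upperBounds (lowerBounds {x, z} ∪ lowerBounds {y, z})))
    (Θ : P → P → Prop) (hΘ : IsCong Θ) (hΘc : ∀ u v : P, Θ u v → Θ (c u) (c v))
    (a b : P) :
    (Θ a b → (MinU a (c b) ∩ cls Θ (⊤ : P)).Nonempty) ∧
    (a ≤ b → (lowerBounds (upperBounds {a, c b}) ∩ cls Θ (⊤ : P)).Nonempty → Θ a b) ∧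
    (a ≤ b → ∀ j : P, IsLUB {a, c b} j → (Θ a b ↔ j ∈ cls Θ (⊤ : P))) := by

  obtain ⟨heq, hmaxl, hminu⟩ := hΘ
  have part1 : Θ a b → (MinU a (c b) ∩ cls Θ (⊤ : P)).Nonempty := by
    intro hab
    obtain ⟨u, hu, v, hv, huv⟩ := hminu a b (c b) (c b) hab (heq.refl (c b))
    have hv' : v = ⊤ := by
      have := hv.1
      rw [(hcompl b).1] at this
      exact this
    rw [hv'] at huv
    exact ⟨u, hu, heq.symm huv⟩
  have part2 : a ≤ b → (lowerBounds (upperBounds {a, c b}) ∩ cls Θ (⊤ : P)).Nonempty → Θ a b := by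
    rintro hab ⟨e, he, hte⟩
    obtain ⟨g, hg, f, hf, hgf⟩ := hmaxl ⊤ e b b hte (heq.refl b)
    have hg' : g = b := by
      have h1 : MaxL (⊤ : P) b = {b} := by
        unfold MaxL
        rw [Set.pair_comm, lb_pair le_top, maxEl_Iic]
      rw [h1] at hg; exact hg
    rw [hg'] at hgf
    have hfe : f ≤ e := hf.1 (Set.mem_insert _ _)
    have hfb : f ≤ b := hf.1 (Set.mem_insert_of_mem _ rfl)
    have hfa : f ≤ a := by
      have hmem : f ∈ lowerBounds (upperBounds {a, c b} ∪ {b}) := by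
        rintro s (hs | hs)
        · exact le_trans hfe (he hs)
        · rw [Set.mem_singleton_iff] at hs; subst hs; exact hfb
      rw [hdist a (c b) b, lb_pair hab, Set.pair_comm, (hcompl b).2] at hmem
      have ha : a ∈ upperBounds (Set.Iic a ∪ {(⊥ : P)}) := by
        rintro s (hs | hs)
        · exact hs
        · rw [Set.mem_singleton_iff] at hs; subst hs; exact bot_le
      exact hmem ha
    obtain ⟨g', hg', f', hf', hg'f'⟩ := hmaxl b f a a hgf (heq.refl a)
    have hg'' : g' = a := by
      have h1 : MaxL b a = {a} := by
        unfold MaxL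
        rw [Set.pair_comm, lb_pair hab, maxEl_Iic]
      rw [h1] at hg'; exact hg'
    have hf'' : f' = f := by
      have h1 : MaxL f a = {f} := by
        unfold MaxL
        rw [lb_pair hfa, maxEl_Iic]
      rw [h1] at hf'; exact hf'
    rw [hg'', hf''] at hg'f'
    exact heq.trans hg'f' (heq.symm hgf)
  refine ⟨part1, part2, ?_⟩
  intro hab j hj
  constructor
  · intro h
    obtain ⟨u, hu, htu⟩ := part1 h
    have huj : u = j := hu.2 j hj.1 (hj.2 hu.1)
    rw [← huj]; exact htu
  · intro htj
    exact part2 hab ⟨j, fun s hs => hj.2 hs, htj⟩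
end
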